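/- arXiv:2008.06790 — 4 statements merged into one kernel-verified Lean document; each statement's English description precedes it below -/
import Mathlib

section
/- Determinizing a reversed DFA yields a minimal DFA after removing unreachable states: if A is a DFA all of whose states are reachable from the initial state, then the DFA obtained by applying the subset construction to reverse(A) and restricting to subsets reachable from the initial subset Acc(A) is the minimal DFA for the language L(A)^R. Minimality means: all states are reachable, and no two distinct states accept the same residual language. -/
/-! The state reached in the subset construction for `reverse(A)` after reading `w` from a set `S`
is the set of states `q` with `δ(q, wᴿ) ∈ S`, so the residual language of `S` is
`{w | δ(s₀, wᴿ) ∈ S}`. Since every state of `A` has the form `δ(s₀, u)`, a subset `S` can be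
read off from its residual language, and distinct subsets have distinct residual languages. -/

/-- The reversal of a DFA: the NFA with initial states `Acc`, accepting states `{s₀}`,
and reversed transitions. -/
def dfaRev {α σ : Type*} (A : DFA α σ) : NFA α σ where
  step s a := {s' | A.step s' a = s}
  start := A.accept
  accept := {A.start}

/-- The set of states of a DFA reachable from the initial state by some word. -/
def reach {α σ : Type*} (D : DFA α σ) : Set σ := {q | ∃ w : List α, D.evalFrom D.start w = q}

/-- The DFA obtained by removing all states unreachable from the initial state. -/
def restrictReach {α σ : Type*} (D : DFA α σ) : DFA α (reach D) where
  step q a := ⟨D.step q.1 a, by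
    obtain ⟨w, hw⟩ := q.2
    exact ⟨w ++ [a], by rw [DFA.evalFrom_append_singleton, hw]⟩⟩
  start := ⟨D.start, ⟨[], rfl⟩⟩
  accept := {q | q.1 ∈ D.accept}

/-- A DFA is minimal if every state is reachable from the initial state and no two distinct
states accept the same residual language. -/
def IsMinimal {α σ : Type*} (D : DFA α σ) : Prop :=
  (∀ q : σ, ∃ w : List α, D.evalFrom D.start w = q) ∧
    ∀ q q' : σ, D.acceptsFrom q = D.acceptsFrom q' → q = q'

section RestrictReach

variable {α σ : Type*} (D : DFA α σ)

theorem restrictReach_evalFrom_coe (q : reach D) (w : List α) :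
    ((restrictReach D).evalFrom q w : σ) = D.evalFrom q w := by
  induction w generalizing q with
  | nil => rfl
  | cons a w ih => exact ih _

theorem restrictReach_acceptsFrom (q : reach D) :
    (restrictReach D).acceptsFrom q = D.acceptsFrom q := by
  ext w
  exact Iff.of_eq (congrArg (· ∈ D.accept) (restrictReach_evalFrom_coe D q w))

theorem restrictReach_accepts : (restrictReach D).accepts = D.accepts :=
  restrictReach_acceptsFrom D _

theorem isMinimal_restrictReach_of_injOn (h : Set.InjOn D.acceptsFrom (reach D)) :
    IsMinimal (restrictReach D) := by
  refine ⟨fun ⟨q, w, hw⟩ ↦ ⟨w, Subtype.ext ?_⟩, fun q q' hq ↦ Subtype.ext ?_⟩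
  · rw [restrictReach_evalFrom_coe]
    exact hw
  · rw [restrictReach_acceptsFrom, restrictReach_acceptsFrom] at hq
    exact h q.2 q'.2 hq

end RestrictReach

section DfaRev

variable {α σ : Type*} (A : DFA α σ)

theorem dfaRev_toDFA_evalFrom (S : Set σ) (w : List α) :
    (dfaRev A).toDFA.evalFrom S w = {q | A.evalFrom q w.reverse ∈ S} := by
  induction w generalizing S with
  | nil => rfl
  | cons a w ih =>
    rw [DFA.evalFrom_cons, ih]
    ext q
    simp [NFA.toDFA, NFA.stepSet, dfaRev, DFA.evalFrom_append_singleton]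

theorem mem_dfaRev_toDFA_acceptsFrom (S : Set σ) (w : List α) :
    w ∈ (dfaRev A).toDFA.acceptsFrom S ↔ A.eval w.reverse ∈ S := by
  rw [DFA.mem_acceptsFrom, dfaRev_toDFA_evalFrom]
  simp [NFA.toDFA, dfaRev, DFA.eval]

theorem dfaRev_toDFA_accepts : (dfaRev A).toDFA.accepts = A.accepts.reverse := by
  ext w
  exact mem_dfaRev_toDFA_acceptsFrom A A.accept w

theorem dfaRev_toDFA_acceptsFrom_injective (hA : Function.Surjective A.eval) :
    Function.Injective (dfaRev A).toDFA.acceptsFrom := by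
  intro S S' h
  ext q
  obtain ⟨u, rfl⟩ := hA q
  simpa [mem_dfaRev_toDFA_acceptsFrom] using congrArg (u.reverse ∈ ·) h

end DfaRev

/-- Determinizing a reversed DFA yields a minimal DFA after removing unreachable states:
if all states of the DFA `A` are reachable, then the subset construction applied to
`reverse(A)`, restricted to subsets reachable from the initial subset `Acc(A)`, is the
minimal DFA for the reverse language `L(A)^R`. -/
theorem determinize_reverse_minimal {α σ : Type*} (A : DFA α σ)
    (hA : ∀ q : σ, ∃ w : List α, A.evalFrom A.start w = q) :
    IsMinimal (restrictReach (dfaRev A).toDFA) ∧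
      (restrictReach (dfaRev A).toDFA).accepts = List.reverse '' A.accepts := by
  refine ⟨isMinimal_restrictReach_of_injOn _
    (dfaRev_toDFA_acceptsFrom_injective A hA).injOn, ?_⟩
  rw [restrictReach_accepts, dfaRev_toDFA_accepts, Language.reverse_eq_image]
end

section
/- A deterministic finite automaton in which every state is reachable and no two distinct states have equal residual languages has the minimum number of states among all DFAs recognizing its language. -/
namespace DFA

variable {α σ : Type*}

theorem range_leftQuotient_accepts (M : DFA α σ) :
    Set.range M.accepts.leftQuotient = Set.range (M.acceptsFrom ∘ M.eval) := by
  rw [Language.leftQuotient_accepts]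

theorem card_range_leftQuotient_accepts_le [Fintype σ] (M : DFA α σ) :
    Nat.card (Set.range M.accepts.leftQuotient) ≤ Fintype.card σ := by
  rw [range_leftQuotient_accepts, ← Nat.card_eq_fintype_card]
  calc Nat.card (Set.range (M.acceptsFrom ∘ M.eval))
      ≤ Nat.card (Set.range M.acceptsFrom) :=
        Nat.card_mono (Set.toFinite _) (Set.range_comp_subset_range _ _)
    _ ≤ Nat.card σ := Finite.card_range_le _

end DFA

theorem IsMinimal.card_range_leftQuotient_accepts {α σ : Type*} [Finite σ] {D : DFA α σ}
    (hD : IsMinimal D) :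
    Nat.card (Set.range D.accepts.leftQuotient) = Nat.card σ := by
  obtain ⟨hreach, hsep⟩ := hD
  have hsurj : Function.Surjective D.eval := hreach
  rw [DFA.range_leftQuotient_accepts, hsurj.range_comp]
  exact Nat.card_range_of_injective hsep

/-- A deterministic finite automaton in which every state is reachable and no two distinct
states have equal residual languages has the minimum number of states among all DFAs
recognizing its language. -/
theorem minimal_has_fewest_states {α : Type*} {σ σ' : Type*} [Fintype σ] [Fintype σ']
    (D : DFA α σ) (hD : IsMinimal D) (D' : DFA α σ') (h : D'.accepts = D.accepts) :
    Fintype.card σ ≤ Fintype.card σ' := by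
  calc Fintype.card σ = Nat.card (Set.range D.accepts.leftQuotient) := by
        rw [hD.card_range_leftQuotient_accepts, Nat.card_eq_fintype_card]
    _ ≤ Fintype.card σ' := h ▸ D'.card_range_leftQuotient_accepts_le
end

section
/- Any two minimal DFAs recognizing the same language are isomorphic: there is a bijection between their states preserving the initial state, transitions, and acceptance. -/
namespace DFA

variable {α σ σ' σ'' : Type*}

structure IsIso (M : DFA α σ) (M' : DFA α σ') (f : σ ≃ σ') : Prop where
  map_start : f M.start = M'.start
  map_step : ∀ (s : σ) (a : α), f (M.step s a) = M'.step (f s) a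
  mem_accept_iff : ∀ s : σ, s ∈ M.accept ↔ f s ∈ M'.accept

namespace IsIso

variable {M : DFA α σ} {M' : DFA α σ'} {M'' : DFA α σ''}

theorem symm {f : σ ≃ σ'} (hf : M.IsIso M' f) : M'.IsIso M f.symm where
  map_start := f.symm_apply_eq.2 hf.map_start.symm
  map_step s a := f.symm_apply_eq.2 (by rw [hf.map_step, f.apply_symm_apply])
  mem_accept_iff s := by rw [hf.mem_accept_iff, f.apply_symm_apply]

theorem trans {f : σ ≃ σ'} {g : σ' ≃ σ''} (hf : M.IsIso M' f) (hg : M'.IsIso M'' g) :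
    M.IsIso M'' (f.trans g) where
  map_start := by simp only [Equiv.trans_apply, hf.map_start, hg.map_start]
  map_step s a := by simp only [Equiv.trans_apply, hf.map_step, hg.map_step]
  mem_accept_iff s := (hf.mem_accept_iff s).trans (hg.mem_accept_iff (f s))

end IsIso

theorem acceptsFrom_step (M : DFA α σ) (s : σ) (a : α) :
    M.acceptsFrom (M.step s a) = (M.acceptsFrom s).leftQuotient [a] :=
  rfl

theorem nil_mem_acceptsFrom (M : DFA α σ) (s : σ) : [] ∈ M.acceptsFrom s ↔ s ∈ M.accept :=
  Iff.rfl

theorem range_acceptsFrom_of_surjective_eval (M : DFA α σ) (hM : Function.Surjective M.eval) :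
    Set.range M.acceptsFrom = Set.range M.accepts.leftQuotient := by
  rw [Language.leftQuotient_accepts, hM.range_comp]

end DFA

open DFA

theorem IsMinimal.exists_isIso_toDFA {α σ : Type*} {M : DFA α σ} (hM : IsMinimal M) :
    ∃ f : σ ≃ Set.range M.accepts.leftQuotient, M.IsIso M.accepts.toDFA f := by
  let f := (Equiv.ofInjective M.acceptsFrom hM.2).trans
    (Equiv.setCongr (M.range_acceptsFrom_of_surjective_eval hM.1))
  have hf (s : σ) : (f s : Language α) = M.acceptsFrom s := rfl
  refine ⟨f, ⟨Subtype.ext (hf M.start), fun s a => Subtype.ext ?_, fun s => ?_⟩⟩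
  · rw [Language.step_toDFA, hf, hf, acceptsFrom_step]
  · rw [Language.mem_accept_toDFA, hf, nil_mem_acceptsFrom]

/-- Any two minimal DFAs recognizing the same language are isomorphic: there is a bijection
between their states preserving the initial state, transitions, and acceptance. -/
theorem minimal_dfa_unique_up_to_iso {α σ₁ σ₂ : Type*}
    (D₁ : DFA α σ₁) (D₂ : DFA α σ₂) (h₁ : IsMinimal D₁) (h₂ : IsMinimal D₂)
    (h : D₁.accepts = D₂.accepts) :
    ∃ f : σ₁ ≃ σ₂, f D₁.start = D₂.start ∧
      (∀ (s : σ₁) (a : α), f (D₁.step s a) = D₂.step (f s) a) ∧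
      (∀ s : σ₁, s ∈ D₁.accept ↔ f s ∈ D₂.accept) := by
  obtain ⟨f₁, hf₁⟩ : ∃ f₁ : σ₁ ≃ _, D₁.IsIso D₂.accepts.toDFA f₁ := h ▸ h₁.exists_isIso_toDFA
  obtain ⟨f₂, hf₂⟩ := h₂.exists_isIso_toDFA
  obtain ⟨map_start, map_step, mem_accept_iff⟩ := hf₁.trans hf₂.symm
  exact ⟨f₁.trans f₂.symm, map_start, map_step, mem_accept_iff⟩
end

section
/- In the subset construction applied to the codeterministic reversal of a DFA A (with accepting states Acc of A as the initial subset), any two distinct reachable subsets T₁ ≠ T₂ have distinct residual languages; i.e., the reachable part of determinize(reverse(A)) already has pairwise distinct residual languages. -/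
namespace dfaRev

variable {α σ : Type*} (A : DFA α σ)

theorem stepSet_eq (T : Set σ) (a : α) : (dfaRev A).stepSet T a = {s | A.step s a ∈ T} := by
  ext s
  simp [NFA.mem_stepSet, dfaRev]

theorem toDFA_evalFrom (T : Set σ) (w : List α) :
    (dfaRev A).toDFA.evalFrom T w = {s | A.evalFrom s w.reverse ∈ T} := by
  induction w generalizing T with
  | nil => rfl
  | cons a w ih =>
    rw [DFA.evalFrom_cons, ih]
    ext s
    simp [NFA.toDFA, stepSet_eq, DFA.evalFrom_append_singleton]

theorem toDFA_mem_acceptsFrom (T : Set σ) (w : List α) :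
    w ∈ (dfaRev A).toDFA.acceptsFrom T ↔ A.eval w.reverse ∈ T := by
  rw [DFA.mem_acceptsFrom, toDFA_evalFrom]
  simp [NFA.toDFA, dfaRev, DFA.eval]

theorem toDFA_acceptsFrom_injective (hA : Function.Surjective A.eval) :
    Function.Injective (dfaRev A).toDFA.acceptsFrom := by
  intro T₁ T₂ h
  ext q
  obtain ⟨w, rfl⟩ := hA q
  rw [← w.reverse_reverse, ← toDFA_mem_acceptsFrom, ← toDFA_mem_acceptsFrom, h]

end dfaRev

/-- In the subset construction applied to the codeterministic reversal of a DFA `A` all of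
whose states are reachable (with `Acc(A)` as the initial subset), any two distinct reachable
subsets `T₁ ≠ T₂` have distinct residual languages. -/
theorem determinize_reverse_distinguishable {α σ : Type*} (A : DFA α σ)
    (hA : ∀ q : σ, ∃ w : List α, A.evalFrom A.start w = q) :
    ∀ T₁ T₂ : Set σ,
      (∃ w : List α, (dfaRev A).toDFA.evalFrom (dfaRev A).toDFA.start w = T₁) →
      (∃ w : List α, (dfaRev A).toDFA.evalFrom (dfaRev A).toDFA.start w = T₂) →
      T₁ ≠ T₂ →
      (dfaRev A).toDFA.acceptsFrom T₁ ≠ (dfaRev A).toDFA.acceptsFrom T₂ :=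
  fun _ _ _ _ hne => (dfaRev.toDFA_acceptsFrom_injective A hA).ne hne
end
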